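/- The Cartesian-tree matching relation is a substring-consistent equivalence relation: if two strings X and Y of equal length have equal Cartesian trees, then for any indices 1 ≤ i ≤ j ≤ |X|, the substrings X[i..j] and Y[i..j] also have equal Cartesian trees. -/

import Mathlib

open List

inductive Shape where
  | nil : Shape
  | node : Shape → Shape → Shape
deriving DecidableEq

inductive BTree (α : Type*) where
  | nil : BTree α
  | node : BTree α → α → BTree α → BTree α

def BTree.shape {α : Type*} : BTree α → Shape
  | .nil => .nil
  | .node l _ r => .node l.shape r.shape

def BTree.rootVal {α : Type*} : BTree α → Option α
  | .nil => none
  | .node _ v _ => some v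

section
variable {α : Type*} [LinearOrder α] [Inhabited α]

/-- Parent-distance value at 1-based position `i` of `S`. -/
def pdVal (S : List α) (i : ℕ) : ℕ :=
  let J := (Finset.Ico 1 i).filter (fun j => S.getD (j-1) default ≤ S.getD (i-1) default)
  if h : J.Nonempty then i - J.max' h else 0

/-- Parent-distance encoding of `S` (1-based positions). -/
def PD (S : List α) : List ℕ := (List.range S.length).map (fun k => pdVal S (k+1))

/-- 0-based index of the leftmost minimum of `S`. -/
def leftmostMinIdx (S : List α) : ℕ :=
  ((List.range S.length).argmin (fun j => S.getD j default)).getD 0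

def CTaux : ℕ → List α → BTree α
  | 0, _ => .nil
  | (n+1), S =>
    if S.isEmpty then .nil else
      let i := leftmostMinIdx S
      .node (CTaux n (S.take i)) (S.getD i default) (CTaux n (S.drop (i+1)))

/-- The (labeled) Cartesian tree of `S`. -/
def CT (S : List α) : BTree α := CTaux S.length S

/-- Front pointers of a sequence `u` of naturals (1-based positions `k ≥ 2` with `k - u[k] = 1`). -/
def frontPointers (u : List ℕ) : Finset ℕ :=
  (Finset.Icc 2 u.length).filter (fun k => k - u.getD (k-1) 0 = 1)

/-- `FP(S)[i]`: number of front pointers of `PD(S[i..])` (1-based `i`). -/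
def FPval (S : List α) (i : ℕ) : ℕ := (frontPointers (PD (S.drop (i-1)))).card

/-- The FP encoding of `S`. -/
def FP (S : List α) : List ℕ := (List.range S.length).map (fun k => FPval S (k+1))

end

/-! Strings that ct-match have their leftmost minima at the same position, and their parts to the
left and to the right of it ct-match. A prefix that ends before the minimum is a prefix of the left
part; a longer one keeps the minimum and cuts the right part to a prefix. Symmetrically for
suffixes. Induction along the recursion defining the Cartesian tree therefore shows that
ct-matching is preserved by prefixes and by suffixes, hence by substrings. -/

theorem List.idxOf_range {n a : ℕ} (h : a < n) : (List.range n).idxOf a = a := by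
  have := List.nodup_range.idxOf_getElem a (by simpa using h)
  rwa [List.getElem_range] at this

theorem List.getD_take_of_lt {γ : Type*} {S : List γ} {n j : ℕ} (h : j < n) (d : γ) :
    (S.take n).getD j d = S.getD j d := by
  simp [List.getD_eq_getElem?_getD, h]

theorem List.getD_drop {γ : Type*} (S : List γ) (n j : ℕ) (d : γ) :
    (S.drop n).getD j d = S.getD (n + j) d := by
  simp [List.getD_eq_getElem?_getD]

def Shape.size : Shape → ℕ
  | .nil => 0
  | .node l r => l.size + r.size + 1

section CartesianTree

variable {α β : Type*} [LinearOrder α] [Inhabited α] [LinearOrder β] [Inhabited β]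

def IsLeftmostMin (S : List α) (m : ℕ) : Prop :=
  m < S.length ∧ (∀ j < S.length, S.getD m default ≤ S.getD j default) ∧
    ∀ j < m, S.getD m default < S.getD j default

lemma isLeftmostMin_leftmostMinIdx {S : List α} (h : S ≠ []) :
    IsLeftmostMin S (leftmostMinIdx S) := by
  cases hm : (List.range S.length).argmin (fun j => S.getD j default) with
  | none => simp_all
  | some m =>
    have hlm : leftmostMinIdx S = m := by rw [leftmostMinIdx, hm]; rfl
    obtain ⟨hmem, hle, hidx⟩ := List.argmin_eq_some_iff.mp hm
    have hmlt : m < S.length := List.mem_range.mp hmem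
    refine hlm ▸ ⟨hmlt, fun j hj => hle j (List.mem_range.mpr hj), fun j hj => ?_⟩
    by_contra! hjm
    have := hidx j (List.mem_range.mpr (hj.trans hmlt)) hjm
    rw [List.idxOf_range hmlt, List.idxOf_range (hj.trans hmlt)] at this
    omega

lemma IsLeftmostMin.unique {S : List α} {m m' : ℕ} (h : IsLeftmostMin S m)
    (h' : IsLeftmostMin S m') : m = m' := by
  rcases lt_trichotomy m m' with hlt | heq | hgt
  · exact absurd (h'.2.2 m hlt) (h.2.1 m' h'.1).not_gt
  · exact heq
  · exact absurd (h.2.2 m' hgt) (h'.2.1 m h.1).not_gt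

lemma IsLeftmostMin.leftmostMinIdx_eq {S : List α} {m : ℕ} (h : IsLeftmostMin S m) :
    leftmostMinIdx S = m :=
  (isLeftmostMin_leftmostMinIdx (List.ne_nil_of_length_pos (by have := h.1; omega))).unique h

lemma leftmostMinIdx_take {S : List α} {n : ℕ} (h : S ≠ []) (hn : leftmostMinIdx S < n) :
    leftmostMinIdx (S.take n) = leftmostMinIdx S := by
  obtain ⟨hlt, hle, hlt'⟩ := isLeftmostMin_leftmostMinIdx h
  refine IsLeftmostMin.leftmostMinIdx_eq ⟨by simp [hlt, hn], fun j hj => ?_, fun j hj => ?_⟩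
  · rw [List.length_take] at hj
    rw [List.getD_take_of_lt hn, List.getD_take_of_lt (by omega)]
    exact hle j (by omega)
  · rw [List.getD_take_of_lt hn, List.getD_take_of_lt (by omega)]
    exact hlt' j hj

lemma leftmostMinIdx_drop {S : List α} {d : ℕ} (h : S ≠ []) (hd : d ≤ leftmostMinIdx S) :
    leftmostMinIdx (S.drop d) = leftmostMinIdx S - d := by
  obtain ⟨hlt, hle, hlt'⟩ := isLeftmostMin_leftmostMinIdx h
  have hidx : d + (leftmostMinIdx S - d) = leftmostMinIdx S := by omega
  refine IsLeftmostMin.leftmostMinIdx_eq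
    ⟨by simp only [List.length_drop]; omega, fun j hj => ?_, fun j hj => ?_⟩
  · rw [List.length_drop] at hj
    rw [List.getD_drop, List.getD_drop, hidx]
    exact hle _ (by omega)
  · rw [List.getD_drop, List.getD_drop, hidx]
    exact hlt' _ (by omega)

lemma CTaux_nil (n : ℕ) : CTaux n ([] : List α) = .nil := by
  cases n <;> rfl

lemma CTaux_eq_of_length_le {n m : ℕ} {S : List α} (hn : S.length ≤ n) (hm : S.length ≤ m) :
    CTaux n S = CTaux m S := by
  induction n generalizing S m with
  | zero => rw [List.eq_nil_of_length_eq_zero (Nat.le_zero.mp hn), CTaux_nil, CTaux_nil]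
  | succ n ih =>
    rcases eq_or_ne S [] with rfl | hS
    · rw [CTaux_nil, CTaux_nil]
    have hpos := List.length_pos_iff.mpr hS
    obtain ⟨m, rfl⟩ := Nat.exists_eq_add_one_of_ne_zero (n := m) (by omega)
    have hmS := (isLeftmostMin_leftmostMinIdx hS).1
    simp only [CTaux, List.isEmpty_iff, hS, if_false]
    congr 1 <;>
      exact ih (by simp only [List.length_take, List.length_drop]; omega)
        (by simp only [List.length_take, List.length_drop]; omega)

lemma CT_eq_node {S : List α} (h : S ≠ []) :
    CT S = .node (CT (S.take (leftmostMinIdx S))) (S.getD (leftmostMinIdx S) default)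
      (CT (S.drop (leftmostMinIdx S + 1))) := by
  have hmS := (isLeftmostMin_leftmostMinIdx h).1
  obtain ⟨L, hL⟩ := Nat.exists_eq_add_one_of_ne_zero (List.length_pos_iff.mpr h).ne'
  rw [CT, hL]
  simp only [CTaux, List.isEmpty_iff, h, if_false]
  congr 1 <;>
    exact CTaux_eq_of_length_le (by simp only [List.length_take, List.length_drop]; omega) (by simp)

@[elab_as_elim]
lemma CT_induction {motive : List α → Prop} (nil : motive [])
    (node : ∀ S, S ≠ [] → motive (S.take (leftmostMinIdx S)) →
      motive (S.drop (leftmostMinIdx S + 1)) → motive S) (S : List α) : motive S := by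
  induction h : S.length using Nat.strong_induction_on generalizing S with
  | _ L ih =>
    rcases eq_or_ne S [] with rfl | hS
    · exact nil
    have hmS := (isLeftmostMin_leftmostMinIdx hS).1
    exact node S hS (ih _ (by simp only [List.length_take]; omega) _ rfl)
      (ih _ (by simp only [List.length_drop]; omega) _ rfl)

lemma size_shape_CT (S : List α) : (CT S).shape.size = S.length := by
  induction S using CT_induction with
  | nil => rfl
  | node S hS ihl ihr =>
    have hmS := (isLeftmostMin_leftmostMinIdx hS).1
    rw [CT_eq_node hS, BTree.shape, Shape.size, ihl, ihr]
    simp; omega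

def CTMatch (X : List α) (Y : List β) : Prop := (CT X).shape = (CT Y).shape

namespace CTMatch

variable {X : List α} {Y : List β}

lemma length_eq (h : CTMatch X Y) : X.length = Y.length := by
  simpa only [size_shape_CT] using congrArg Shape.size h

lemma nil_iff (h : CTMatch X Y) : X = [] ↔ Y = [] := by
  simp only [← List.length_eq_zero_iff, h.length_eq]

lemma iff_of_ne_nil (hX : X ≠ []) (hY : Y ≠ []) :
    CTMatch X Y ↔ leftmostMinIdx X = leftmostMinIdx Y ∧
      CTMatch (X.take (leftmostMinIdx X)) (Y.take (leftmostMinIdx X)) ∧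
      CTMatch (X.drop (leftmostMinIdx X + 1)) (Y.drop (leftmostMinIdx X + 1)) := by
  have hmX := (isLeftmostMin_leftmostMinIdx hX).1
  have hmY := (isLeftmostMin_leftmostMinIdx hY).1
  unfold CTMatch
  rw [CT_eq_node hX, CT_eq_node hY]
  simp only [BTree.shape, Shape.node.injEq]
  constructor
  · rintro ⟨hl, hr⟩
    -- the position of the root is the size of the left subtree
    have hm : leftmostMinIdx X = leftmostMinIdx Y := by
      simpa [size_shape_CT, hmX.le, hmY.le] using congrArg Shape.size hl
    rw [← hm] at hl hr
    exact ⟨hm, hl, hr⟩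
  · rintro ⟨hm, hl, hr⟩
    rw [← hm]
    exact ⟨hl, hr⟩

lemma take (h : CTMatch X Y) (n : ℕ) : CTMatch (X.take n) (Y.take n) := by
  induction X using CT_induction generalizing Y n with
  | nil => rw [h.nil_iff.mp rfl, List.take_nil, List.take_nil]; rfl
  | node X hX ihl ihr =>
    have hY : Y ≠ [] := mt h.nil_iff.mpr hX
    obtain ⟨hm, hl, hr⟩ := (iff_of_ne_nil hX hY).mp h
    rcases lt_or_ge (leftmostMinIdx X) n with hmn | hnm
    · have hmX := (isLeftmostMin_leftmostMinIdx hX).1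
      have hXn : X.take n ≠ [] :=
        List.ne_nil_of_length_pos (by simp only [List.length_take]; omega)
      have hYn : Y.take n ≠ [] :=
        List.ne_nil_of_length_pos (by simp only [List.length_take, ← h.length_eq]; omega)
      rw [iff_of_ne_nil hXn hYn, leftmostMinIdx_take hX hmn, leftmostMinIdx_take hY (hm ▸ hmn),
        List.take_take, List.take_take, min_eq_left hmn.le, List.drop_take, List.drop_take]
      exact ⟨hm, hl, ihr hr _⟩
    · simpa only [List.take_take, min_eq_left hnm] using ihl hl n

lemma drop (h : CTMatch X Y) (d : ℕ) : CTMatch (X.drop d) (Y.drop d) := by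
  induction X using CT_induction generalizing Y d with
  | nil => rw [h.nil_iff.mp rfl, List.drop_nil, List.drop_nil]; rfl
  | node X hX ihl ihr =>
    have hY : Y ≠ [] := mt h.nil_iff.mpr hX
    obtain ⟨hm, hl, hr⟩ := (iff_of_ne_nil hX hY).mp h
    set m := leftmostMinIdx X
    rcases le_or_gt d m with hdm | hmd
    · have hmX := (isLeftmostMin_leftmostMinIdx hX).1
      have hXd : X.drop d ≠ [] :=
        List.ne_nil_of_length_pos (by simp only [List.length_drop]; omega)
      have hYd : Y.drop d ≠ [] :=
        List.ne_nil_of_length_pos (by simp only [List.length_drop, ← h.length_eq]; omega)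
      have hsplit : d + (m - d + 1) = m + 1 := by omega
      rw [iff_of_ne_nil hXd hYd, leftmostMinIdx_drop hX hdm, leftmostMinIdx_drop hY (hm ▸ hdm),
        ← List.drop_take, ← List.drop_take, List.drop_drop, List.drop_drop, hsplit, ← hm]
      exact ⟨rfl, ihl hl d, hr⟩
    · simpa only [List.drop_drop, show m + 1 + (d - (m + 1)) = d by omega] using
        ihr hr (d - (m + 1))

end CTMatch

end CartesianTree

theorem stmt3_general {α β : Type*} [LinearOrder α] [Inhabited α] [LinearOrder β] [Inhabited β]
    (X : List α) (Y : List β)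
    (hct : (CT X).shape = (CT Y).shape)
    (i j : ℕ) :
    (CT ((X.drop (i-1)).take (j - i + 1))).shape
      = (CT ((Y.drop (i-1)).take (j - i + 1))).shape :=
  (CTMatch.drop hct (i - 1)).take (j - i + 1)

/-- Cartesian-tree matching is a substring-consistent equivalence relation. -/
theorem stmt3 {α β : Type*} [LinearOrder α] [Inhabited α] [LinearOrder β] [Inhabited β]
    (X : List α) (Y : List β) (hlen : X.length = Y.length)
    (hct : (CT X).shape = (CT Y).shape)
    (i j : ℕ) (hi : 1 ≤ i) (hij : i ≤ j) (hj : j ≤ X.length) :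
    (CT ((X.drop (i-1)).take (j - i + 1))).shape
      = (CT ((Y.drop (i-1)).take (j - i + 1))).shape :=
  stmt3_general X Y hct i j
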